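/- Let m ∈ M with ‖m‖₁ > 0 and D* = sup_{s∈S} D_m(s). Then the supremum of D_m over S is attained, and D* equals the Dice score of the threshold segmentation s* = I_{[D*/2, 1]}∘m (indicator of {ω : m(ω) ≥ D*/2}). -/

import Mathlib

open MeasureTheory Filter

noncomputable section

/-- The unit cube `[0,1]^n`. -/
def cube (n : ℕ) : Set (Fin n → ℝ) := Set.univ.pi fun _ => Set.Icc (0:ℝ) 1

/-- The (normalized) Lebesgue measure on the unit cube. -/
def lam (n : ℕ) : Measure (Fin n → ℝ) := volume.restrict (cube n)

/-- The `L¹`-volume `‖f‖₁ = ∫ f dλ` (for nonnegative `f`). -/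
def vol1 (n : ℕ) (f : (Fin n → ℝ) → ℝ) : ℝ := ∫ ω, f ω ∂(lam n)

/-- The Dice score `D_m(s) = 2∫ s·m dλ / (‖s‖₁ + ‖m‖₁)`. -/
def Dice (n : ℕ) (m s : (Fin n → ℝ) → ℝ) : ℝ :=
  2 * (∫ ω, s ω * m ω ∂(lam n)) / (vol1 n s + vol1 n m)

/-- The soft-Dice loss `SD_m(c) = 1 - 2∫ c·m dλ / (‖c‖₁ + ‖m‖₁)`. -/
def softDice (n : ℕ) (m c : (Fin n → ℝ) → ℝ) : ℝ :=
  1 - 2 * (∫ ω, c ω * m ω ∂(lam n)) / (vol1 n c + vol1 n m)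

/-- Membership in `M`: measurable with values in `[0,1]`. -/
def MemM (n : ℕ) (m : (Fin n → ℝ) → ℝ) : Prop :=
  Measurable m ∧ ∀ ω, m ω ∈ Set.Icc (0:ℝ) 1

/-- Membership in `S`: measurable with values in `{0,1}`. -/
def MemS (n : ℕ) (s : (Fin n → ℝ) → ℝ) : Prop :=
  Measurable s ∧ ∀ ω, s ω = 0 ∨ s ω = 1

/-- The set of soft-Dice values over `M`. -/
def SDvals (n : ℕ) (m : (Fin n → ℝ) → ℝ) : Set ℝ :=
  {x : ℝ | ∃ c, MemM n c ∧ x = softDice n m c}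

/-- The set of Dice values over `S`. -/
def Dvals (n : ℕ) (m : (Fin n → ℝ) → ℝ) : Set ℝ :=
  {x : ℝ | ∃ s, MemS n s ∧ x = Dice n m s}


/-!
Dinkelbach's linearisation: for a level `t`, the excess `2∫ s·m - t(‖s‖₁ + ‖m‖₁)` is affine
in `s`, equal to `∫ s·(2m - t) - t‖m‖₁`, hence maximised pointwise by the indicator of
`{2m ≥ t}`. At `t = D*` every excess is `≤ 0`; if the threshold's excess were strictly negative,
dividing by denominators `‖s‖₁ + ‖m‖₁ ≤ 1 + ‖m‖₁` would push every Dice score a fixed amount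
below `D*`, contradicting `D* = sup`. So the threshold has excess `0`, i.e. Dice score `D*`.
-/

instance (n : ℕ) : IsProbabilityMeasure (lam n) := by
  constructor
  rw [lam, Measure.restrict_apply_univ, cube, Set.pi_univ_Icc, Real.volume_Icc_pi]
  simp

def threshold {α : Type*} (m : α → ℝ) (t : ℝ) : α → ℝ := fun ω => if t ≤ m ω then 1 else 0

/-- Has the sign of `Dice n m s - t` whenever `‖s‖₁ + ‖m‖₁ > 0`. -/
def diceExcess (n : ℕ) (m : (Fin n → ℝ) → ℝ) (t : ℝ) (s : (Fin n → ℝ) → ℝ) : ℝ :=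
  2 * (∫ ω, s ω * m ω ∂(lam n)) - t * (vol1 n s + vol1 n m)

variable {n : ℕ} {m s : (Fin n → ℝ) → ℝ}

theorem MemS.memM (hs : MemS n s) : MemM n s :=
  ⟨hs.1, fun ω => by rcases hs.2 ω with h | h <;> simp [h]⟩

theorem memS_threshold (hm : Measurable m) (t : ℝ) : MemS n (threshold m t) :=
  ⟨Measurable.ite (measurableSet_le measurable_const hm) measurable_const measurable_const,
    fun ω => by unfold threshold; split_ifs <;> simp⟩

namespace MemM

theorem integrable (hm : MemM n m) : Integrable m (lam n) :=
  (integrable_const (1 : ℝ)).mono' hm.1.aestronglyMeasurable <| ae_of_all _ fun ω => by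
    simpa [abs_of_nonneg (hm.2 ω).1] using (hm.2 ω).2

theorem mul (hs : MemM n s) (hm : MemM n m) : MemM n fun ω => s ω * m ω :=
  ⟨hs.1.mul hm.1, fun ω =>
    ⟨mul_nonneg (hs.2 ω).1 (hm.2 ω).1, mul_le_one₀ (hs.2 ω).2 (hm.2 ω).1 (hm.2 ω).2⟩⟩

theorem vol1_nonneg (hm : MemM n m) : 0 ≤ vol1 n m :=
  integral_nonneg fun ω => (hm.2 ω).1

theorem vol1_le_one (hm : MemM n m) : vol1 n m ≤ 1 :=
  (integral_mono hm.integrable (integrable_const (1 : ℝ)) fun ω => (hm.2 ω).2).trans_eq (by simp)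

theorem integral_mul_le_vol1_left (hs : MemM n s) (hm : MemM n m) :
    ∫ ω, s ω * m ω ∂(lam n) ≤ vol1 n s :=
  integral_mono (hs.mul hm).integrable hs.integrable fun ω =>
    mul_le_of_le_one_right (hs.2 ω).1 (hm.2 ω).2

end MemM

theorem dice_le_one (hm : MemM n m) (hs : MemM n s) : Dice n m s ≤ 1 := by
  have hsm := hs.integral_mul_le_vol1_left hm
  have hms := hm.integral_mul_le_vol1_left hs
  simp only [mul_comm (m _)] at hms
  exact div_le_one_of_le₀ (by linarith) (add_nonneg hs.vol1_nonneg hm.vol1_nonneg)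

theorem bddAbove_dvals (hm : MemM n m) : BddAbove (Dvals n m) :=
  ⟨1, by rintro _ ⟨s, hs, rfl⟩; exact dice_le_one hm hs.memM⟩

theorem dvals_nonempty : (Dvals n m).Nonempty :=
  ⟨0, fun _ => 0, ⟨measurable_const, fun _ => Or.inl rfl⟩, by simp [Dice, vol1]⟩

theorem dice_eq_add_diceExcess_div (t : ℝ) (hden : 0 < vol1 n s + vol1 n m) :
    Dice n m s = t + diceExcess n m t s / (vol1 n s + vol1 n m) := by
  unfold Dice diceExcess
  field_simp
  ring

theorem integrable_mul_two_mul_sub (hm : MemM n m) (hs : MemM n s) (t : ℝ) :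
    Integrable (fun ω => s ω * (2 * m ω - t)) (lam n) :=
  ((hs.mul hm).integrable.const_mul 2).sub (hs.integrable.const_mul t) |>.congr
    (ae_of_all _ fun ω => by simp only [Pi.sub_apply]; ring)

theorem integral_mul_two_mul_sub (hm : MemM n m) (hs : MemM n s) (t : ℝ) :
    ∫ ω, s ω * (2 * m ω - t) ∂(lam n) = 2 * (∫ ω, s ω * m ω ∂(lam n)) - t * vol1 n s := by
  have hlin : (fun ω => s ω * (2 * m ω - t)) = fun ω => 2 * (s ω * m ω) - t * s ω := by
    funext ω; ring
  rw [hlin, integral_sub ((hs.mul hm).integrable.const_mul 2) (hs.integrable.const_mul t),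
    integral_const_mul, integral_const_mul, vol1]

theorem diceExcess_eq_integral (hm : MemM n m) (hs : MemM n s) (t : ℝ) :
    diceExcess n m t s = (∫ ω, s ω * (2 * m ω - t) ∂(lam n)) - t * vol1 n m := by
  rw [diceExcess, integral_mul_two_mul_sub hm hs t]
  ring

theorem mul_le_ite_mul {a x : ℝ} (ha : a ∈ Set.Icc (0 : ℝ) 1) (t : ℝ) :
    a * (2 * x - t) ≤ (if t / 2 ≤ x then 1 else 0) * (2 * x - t) := by
  split_ifs with hx
  · rw [one_mul]
    exact mul_le_of_le_one_left (by linarith) ha.2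
  · rw [zero_mul]
    exact mul_nonpos_of_nonneg_of_nonpos ha.1 (by linarith [not_le.mp hx])

theorem diceExcess_le_threshold (hm : MemM n m) (hs : MemM n s) (t : ℝ) :
    diceExcess n m t s ≤ diceExcess n m t (threshold m (t / 2)) := by
  have hθ := (memS_threshold (n := n) hm.1 (t / 2)).memM
  rw [diceExcess_eq_integral hm hs, diceExcess_eq_integral hm hθ]
  gcongr ?_ - _
  exact integral_mono (integrable_mul_two_mul_sub hm hs t) (integrable_mul_two_mul_sub hm hθ t)
    fun ω => mul_le_ite_mul (hs.2 ω) t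

theorem dice_le_add_diceExcess_threshold_div (hm : MemM n m) (hpos : 0 < vol1 n m)
    (hs : MemM n s) {t : ℝ} (hneg : diceExcess n m t (threshold m (t / 2)) ≤ 0) :
    Dice n m s ≤ t + diceExcess n m t (threshold m (t / 2)) / (1 + vol1 n m) := by
  have hden : 0 < vol1 n s + vol1 n m := by linarith [hs.vol1_nonneg]
  calc Dice n m s = t + diceExcess n m t s / (vol1 n s + vol1 n m) :=
        dice_eq_add_diceExcess_div t hden
    _ ≤ t + diceExcess n m t (threshold m (t / 2)) / (vol1 n s + vol1 n m) := by
        gcongr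
        exact diceExcess_le_threshold hm hs t
    _ ≤ t + diceExcess n m t (threshold m (t / 2)) / (1 + vol1 n m) := by
        gcongr t + ?_
        rw [div_le_div_iff₀ hden (by linarith)]
        exact mul_le_mul_of_nonpos_left (by linarith [hs.vol1_le_one]) hneg

theorem dice_sup_attained_at_threshold
    (n : ℕ) (m : (Fin n → ℝ) → ℝ) (hm : MemM n m) (hpos : 0 < vol1 n m)
    (Dstar : ℝ) (hD : Dstar = sSup (Dvals n m)) :
    MemS n (fun ω => if Dstar / 2 ≤ m ω then (1:ℝ) else 0) ∧
      Dice n m (fun ω => if Dstar / 2 ≤ m ω then (1:ℝ) else 0) = Dstar := by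
  set s₀ := threshold m (Dstar / 2)
  have hs₀ : MemS n s₀ := memS_threshold hm.1 _
  have hden : 0 < vol1 n s₀ + vol1 n m := by linarith [hs₀.memM.vol1_nonneg]
  have hdice_eq := dice_eq_add_diceExcess_div Dstar hden
  have hle : diceExcess n m Dstar s₀ ≤ 0 := by
    have : Dice n m s₀ ≤ Dstar := hD ▸ le_csSup (bddAbove_dvals hm) ⟨s₀, hs₀, rfl⟩
    rw [hdice_eq, add_le_iff_nonpos_right] at this
    exact le_of_not_gt fun h => (div_pos h hden).not_ge this
  have hge : 0 ≤ diceExcess n m Dstar s₀ := by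
    by_contra! hneg
    have hsup : sSup (Dvals n m) ≤ Dstar + diceExcess n m Dstar s₀ / (1 + vol1 n m) :=
      csSup_le dvals_nonempty fun _ ⟨s, hs, hx⟩ =>
        hx ▸ dice_le_add_diceExcess_threshold_div hm hpos hs.memM hneg.le
    rw [← hD] at hsup
    linarith [div_neg_of_neg_of_pos hneg (by linarith : (0 : ℝ) < 1 + vol1 n m)]
  refine ⟨hs₀, ?_⟩
  change Dice n m s₀ = Dstar
  rw [hdice_eq, le_antisymm hle hge, zero_div, add_zero]
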